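/- arXiv:2507.01344 — 5 statements merged into one kernel-verified Lean document; each statement's English description precedes it below -/
import Mathlib

section
/- For any real n×n matrix A, the permanental rank and the permanental nullity satisfy ρ_per(A) + η_per(A) ≥ n. -/
/-- The permanent of a (possibly rectangular) matrix whose rows and columns are indexed by
finite types: the sum over all bijections `e : ι ≃ κ` of `∏ i, M i (e i)`.
For a square matrix this is the usual permanent `∑_{σ ∈ S_n} ∏_{i} M i (σ i)`. -/
noncomputable def Matrix.per {ι κ R : Type*} [Fintype ι] [Fintype κ] [DecidableEq ι]
    [DecidableEq κ] [CommSemiring R] (M : Matrix ι κ R) : R :=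
  ∑ e : ι ≃ κ, ∏ i, M i (e i)

/-- The permanental rank `ρ_per(A)` of an `n × n` matrix: the largest `k` such that some
`k × k` submatrix (rows chosen by an injection `f`, columns by an injection `g`) has
nonzero permanent. -/
noncomputable def permRank {n : ℕ} {R : Type*} [CommSemiring R]
    (A : Matrix (Fin n) (Fin n) R) : ℕ :=
  sSup {k | ∃ f g : Fin k → Fin n, Function.Injective f ∧ Function.Injective g ∧
    (A.submatrix f g).per ≠ 0}

/-- The permanental polynomial `π(A, x) = per(A - x I)`. -/
noncomputable def permPoly {n : ℕ} {R : Type*} [CommRing R]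
    (A : Matrix (Fin n) (Fin n) R) : Polynomial R :=
  (A.map Polynomial.C - (Polynomial.X : Polynomial R) • (1 : Matrix (Fin n) (Fin n) (Polynomial R))).per

/-- The permanental nullity `η_per(A)`: the multiplicity of `0` as a root of the
permanental polynomial. -/
noncomputable def permNullity {n : ℕ} {R : Type*} [CommRing R]
    (A : Matrix (Fin n) (Fin n) R) : ℕ :=
  (permPoly A).rootMultiplicity 0

open Polynomial

lemma per_submatrix_equiv {R : Type*} [CommSemiring R] {ι κ ι' κ' : Type*}
    [Fintype ι] [Fintype κ] [Fintype ι'] [Fintype κ']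
    [DecidableEq ι] [DecidableEq κ] [DecidableEq ι'] [DecidableEq κ']
    (e₁ : ι' ≃ ι) (e₂ : κ' ≃ κ) (M : Matrix ι κ R) :
    (M.submatrix e₁ e₂).per = M.per := by
  unfold Matrix.per
  refine Fintype.sum_equiv (Equiv.equivCongr e₁ e₂) _ _ fun e => ?_
  refine Fintype.prod_equiv e₁ _ (fun i => M i (((Equiv.equivCongr e₁ e₂) e) i)) fun i => ?_
  simp [Equiv.equivCongr]

noncomputable def subPer {n : ℕ} {R : Type*} [CommSemiring R] (A : Matrix (Fin n) (Fin n) R)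
    (S : Finset (Fin n)) : R :=
  (A.submatrix (fun i : {x // x ∈ S} => (i : Fin n)) (fun i : {x // x ∈ S} => (i : Fin n))).per

lemma subPer_empty {n : ℕ} {R : Type*} [CommSemiring R] (A : Matrix (Fin n) (Fin n) R) :
    subPer A ∅ = 1 := by
  unfold subPer Matrix.per
  rw [Finset.sum_congr rfl fun e _ => Finset.prod_of_isEmpty _, Finset.sum_const,
    Finset.card_univ, Fintype.card_equiv (Equiv.refl _)]
  simp

lemma sum_fix {n : ℕ} {R : Type*} [CommRing R] (A : Matrix (Fin n) (Fin n) R)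
    (S : Finset (Fin n)) :
    ∑ e ∈ Finset.univ.filter (fun e : Equiv.Perm (Fin n) => ∀ a, a ∉ S → e a = a),
        ∏ i ∈ S, C (A i (e i)) = C (subPer A S) := by
  classical
  rw [Finset.sum_subtype (Finset.univ.filter _)
    (p := fun e : Equiv.Perm (Fin n) => ∀ a, a ∉ S → e a = a) (by intro e; simp)]
  rw [← Equiv.sum_comp (Equiv.Perm.subtypeEquivSubtypePerm (· ∈ S))]
  unfold subPer Matrix.per
  rw [map_sum]
  refine Finset.sum_congr rfl fun σ _ => ?_
  rw [map_prod, ← Finset.prod_coe_sort S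
    (fun i => C (A i ((((Equiv.Perm.subtypeEquivSubtypePerm (· ∈ S)) σ : { f : Equiv.Perm (Fin n) // ∀ a, ¬ a ∈ S → f a = a }) : Equiv.Perm (Fin n)) i)))]
  refine Finset.prod_congr rfl fun i _ => ?_
  simp only [Matrix.submatrix_apply]
  exact congrArg (fun x => C (A ↑i x)) (σ.ofSubtype_apply_of_mem i.2)

lemma permPoly_eq_sum {n : ℕ} {R : Type*} [CommRing R] (A : Matrix (Fin n) (Fin n) R) :
    permPoly A = ∑ S : Finset (Fin n),
      C (subPer A S) * (-X : R[X]) ^ (n - S.card) := by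
  classical
  have hfac : ∀ (e : Equiv.Perm (Fin n)) (i : Fin n),
      (A.map C - (X : R[X]) • 1) i (e i)
        = C (A i (e i)) + (if i = e i then (-X : R[X]) else 0) := by
    intro e i
    by_cases h : i = e i
    · rw [if_pos h, Matrix.sub_apply, Matrix.map_apply, Matrix.smul_apply, ← h,
        Matrix.one_apply_eq, smul_eq_mul, mul_one, sub_eq_add_neg]
    · rw [if_neg h, Matrix.sub_apply, Matrix.map_apply, Matrix.smul_apply,
        Matrix.one_apply_ne' (fun hh => h hh.symm), smul_zero, sub_zero, add_zero]
  have hg : ∀ (e : Equiv.Perm (Fin n)) (S : Finset (Fin n)),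
      (∏ i ∈ Finset.univ \ S, (if i = e i then (-X : R[X]) else 0))
        = if (∀ a, a ∉ S → e a = a) then (-X : R[X]) ^ (n - S.card) else 0 := by
    intro e S
    by_cases h : ∀ a, a ∉ S → e a = a
    · rw [if_pos h, Finset.prod_congr rfl (fun i hi => if_pos ?_), Finset.prod_const,
        Finset.card_sdiff_of_subset (Finset.subset_univ S), Finset.card_univ, Fintype.card_fin]
      rw [Finset.mem_sdiff] at hi
      exact (h i hi.2).symm
    · rw [if_neg h]
      push_neg at h
      obtain ⟨a, ha, hne⟩ := h
      refine Finset.prod_eq_zero (Finset.mem_sdiff.2 ⟨Finset.mem_univ a, ha⟩) ?_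
      rw [if_neg (fun hh => hne hh.symm)]
  unfold permPoly Matrix.per
  calc ∑ e : Fin n ≃ Fin n, ∏ i, (A.map C - (X : R[X]) • 1) i (e i)
      = ∑ e : Equiv.Perm (Fin n), ∑ S ∈ (Finset.univ : Finset (Fin n)).powerset,
          (∏ i ∈ S, C (A i (e i))) *
            ∏ i ∈ Finset.univ \ S, (if i = e i then (-X : R[X]) else 0) := by
        refine Finset.sum_congr rfl fun e _ => ?_
        rw [Finset.prod_congr rfl fun i _ => hfac e i, Finset.prod_add]
    _ = ∑ S ∈ (Finset.univ : Finset (Fin n)).powerset, ∑ e : Equiv.Perm (Fin n),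
          (∏ i ∈ S, C (A i (e i))) *
            ∏ i ∈ Finset.univ \ S, (if i = e i then (-X : R[X]) else 0) := Finset.sum_comm
    _ = ∑ S : Finset (Fin n), C (subPer A S) * (-X : R[X]) ^ (n - S.card) := by
        rw [Finset.powerset_univ]
        refine Finset.sum_congr rfl fun S _ => ?_
        rw [← sum_fix A S, Finset.sum_mul, Finset.sum_filter]
        refine Finset.sum_congr rfl fun e _ => ?_
        rw [hg e S]
        by_cases h : ∀ a, a ∉ S → e a = a <;> simp [h]

lemma coeff_term {R : Type*} [CommRing R] (c : R) (j m : ℕ) :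
    (C c * (-X : R[X]) ^ j).coeff m = if j = m then (-1 : R) ^ j * c else 0 := by
  have : (C c * (-X : R[X]) ^ j) = C ((-1 : R) ^ j * c) * X ^ j := by
    rw [neg_pow]
    ring_nf
    rw [map_mul, map_pow, map_neg, map_one]
    ring
  rw [this, Polynomial.coeff_C_mul_X_pow]
  simp [eq_comm]

lemma coeff_permPoly {n : ℕ} {R : Type*} [CommRing R] (A : Matrix (Fin n) (Fin n) R) (m : ℕ)
    (hm : ∀ S : Finset (Fin n), n - S.card = m → subPer A S = 0) :
    (permPoly A).coeff m = 0 := by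
  rw [permPoly_eq_sum, Polynomial.finset_sum_coeff]
  refine Finset.sum_eq_zero fun S _ => ?_
  rw [coeff_term]
  by_cases h : n - S.card = m
  · rw [if_pos h, hm S h, mul_zero]
  · rw [if_neg h]

lemma coeff_permPoly_n {n : ℕ} {R : Type*} [CommRing R] (A : Matrix (Fin n) (Fin n) R) :
    (permPoly A).coeff n = (-1 : R) ^ n := by
  rw [permPoly_eq_sum, Polynomial.finset_sum_coeff]
  rw [Finset.sum_eq_single (∅ : Finset (Fin n))]
  · rw [coeff_term, subPer_empty]
    simp
  · intro S _ hS
    rw [coeff_term, if_neg]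
    have h1 : 0 < S.card := Finset.card_pos.2 (Finset.nonempty_iff_ne_empty.2 hS)
    have h2 : S.card ≤ n := by
      simpa using Finset.card_le_univ S
    omega
  · intro h
    exact absurd (Finset.mem_univ _) h

lemma subPer_eq_zero_of_rank_lt {n : ℕ} (A : Matrix (Fin n) (Fin n) ℝ) {S : Finset (Fin n)}
    (h : permRank A < S.card) : subPer A S = 0 := by
  by_contra hne
  unfold permRank at h
  set T := {k | ∃ f g : Fin k → Fin n, Function.Injective f ∧ Function.Injective g ∧
    (A.submatrix f g).per ≠ 0} with hT
  have hbdd : BddAbove T := by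
    refine ⟨n, fun k hk => ?_⟩
    obtain ⟨f, g, hf, hg, _⟩ := hk
    simpa using Fintype.card_le_of_injective f hf
  have hmem : S.card ∈ T := by
    refine ⟨fun i => ↑(S.equivFin.symm i), fun i => ↑(S.equivFin.symm i),
      Subtype.val_injective.comp S.equivFin.symm.injective,
      Subtype.val_injective.comp S.equivFin.symm.injective, ?_⟩
    have : A.submatrix (fun i : Fin S.card => (↑(S.equivFin.symm i) : Fin n))
        (fun i : Fin S.card => (↑(S.equivFin.symm i) : Fin n))
        = (A.submatrix (fun i : {x // x ∈ S} => (i : Fin n))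
            (fun i : {x // x ∈ S} => (i : Fin n))).submatrix S.equivFin.symm S.equivFin.symm := rfl
    rw [this, per_submatrix_equiv]
    exact hne
  exact absurd (le_csSup hbdd hmem) (not_le.2 h)

/-- For any real `n × n` matrix `A`, the permanental rank and the
permanental nullity satisfy `ρ_per(A) + η_per(A) ≥ n`. -/
theorem perm_rank_add_nullity_ge {n : ℕ} (A : Matrix (Fin n) (Fin n) ℝ) :
    permRank A + permNullity A ≥ n := by
  have hne : permPoly A ≠ 0 := by
    intro h
    have := coeff_permPoly_n A
    rw [h, Polynomial.coeff_zero] at this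
    have : ((-1 : ℝ) ^ n) ≠ 0 := by positivity
    simp_all
  have key : n - permRank A ≤ permNullity A := by
    unfold permNullity
    rw [Polynomial.le_rootMultiplicity_iff hne, map_zero, sub_zero, Polynomial.X_pow_dvd_iff]
    intro d hd
    refine coeff_permPoly A d fun S hS => ?_
    refine subPer_eq_zero_of_rank_lt A ?_
    have hcard : S.card ≤ n := by simpa using Finset.card_le_univ S
    omega
  omega
end

section
/- Let A be a nonnegative symmetric real n×n matrix with zero diagonal and let G be the simple graph on [n] with an edge {i,j} if and only if A(i,j) ≠ 0. If ρ_per(A) = k, then G contains a Sachs subgraph on exactly k vertices. -/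
/-- The (simple, undirected) graph on `[n]` associated with a matrix `A`:
`i` and `j` are adjacent iff `i ≠ j` and the corresponding entry is nonzero.
(For a symmetric matrix with zero diagonal this is exactly `A i j ≠ 0`.) -/
def graphOf {n : ℕ} (A : Matrix (Fin n) (Fin n) ℝ) : SimpleGraph (Fin n) :=
  SimpleGraph.fromRel (fun i j => A i j ≠ 0)

/-- The sign that a matrix `A` attaches to an unordered pair of vertices
(for a symmetric matrix, the entry of `A` at that pair). -/
noncomputable def edgeSign {n : ℕ} (A : Matrix (Fin n) (Fin n) ℝ) : Sym2 (Fin n) → ℝ :=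
  Sym2.lift ⟨fun i j => A (min i j) (max i j), fun i j => by simp only [inf_comm, sup_comm]⟩

/-- A Sachs subgraph: a subgraph in which every connected component is a single edge
(a component with exactly two vertices) or a cycle (a component all of whose vertices
have degree two). -/
def IsSachs {V : Type*} {G : SimpleGraph V} (H : G.Subgraph) : Prop :=
  ∀ C : H.coe.ConnectedComponent,
    C.supp.ncard = 2 ∨ ∀ v ∈ C.supp, (H.neighborSet v.val).ncard = 2

/-!
A nonzero term of the permanent of a `k × k` submatrix is an injection `σ` of a `k`-set `I` of
vertices with every `{x, σ x}` an edge. If some `x₀ ∈ I` is not in `σ '' I`, the edge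
`{x₀, σ x₀}` can be split off and the rest of `σ` treated by induction; otherwise `σ` permutes
`I`. Either way we get a permutation `τ` with at least `k` moved points, each joined to its
image by an edge, and the cycles of `τ` form a Sachs subgraph on its support. By nonnegativity,
`τ` also gives a submatrix of size `#τ.support` with positive permanent, so the support has
exactly `ρ_per(A) = k` points.
-/

open Finset Equiv

namespace Matrix

variable {ι κ R : Type*} [Fintype ι] [Fintype κ] [DecidableEq ι] [DecidableEq κ]

theorem exists_equiv_forall_ne_zero_of_per_ne_zero [CommSemiring R] {M : Matrix ι κ R}
    (h : M.per ≠ 0) : ∃ e : ι ≃ κ, ∀ i, M i (e i) ≠ 0 := by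
  obtain ⟨e, -, he⟩ := exists_ne_zero_of_sum_ne_zero h
  exact ⟨e, fun i hi => he (prod_eq_zero (mem_univ i) hi)⟩

theorem per_pos [CommSemiring R] [PartialOrder R] [IsStrictOrderedRing R] {M : Matrix ι κ R}
    (hM : ∀ i j, 0 ≤ M i j) (e : ι ≃ κ) (he : ∀ i, M i (e i) ≠ 0) : 0 < M.per :=
  sum_pos' (fun _ _ => prod_nonneg fun _ _ => hM _ _)
    ⟨e, mem_univ e, prod_pos fun i _ => (hM i (e i)).lt_of_ne' (he i)⟩

end Matrix

section permRank

variable {n : ℕ} {R : Type*} [CommSemiring R]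

theorem bddAbove_permRank_set (A : Matrix (Fin n) (Fin n) R) :
    BddAbove {k | ∃ f g : Fin k → Fin n, Function.Injective f ∧ Function.Injective g ∧
      (A.submatrix f g).per ≠ 0} :=
  ⟨n, fun _ ⟨f, _, hf, _⟩ => by simpa using Fintype.card_le_of_injective f hf⟩

theorem le_permRank {A : Matrix (Fin n) (Fin n) R} {m : ℕ} {f g : Fin m → Fin n}
    (hf : Function.Injective f) (hg : Function.Injective g) (h : (A.submatrix f g).per ≠ 0) :
    m ≤ permRank A :=
  le_csSup (bddAbove_permRank_set A) ⟨f, g, hf, hg, h⟩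

theorem exists_submatrix_per_ne_zero [Nontrivial R] (A : Matrix (Fin n) (Fin n) R) :
    ∃ f g : Fin (permRank A) → Fin n, Function.Injective f ∧ Function.Injective g ∧
      (A.submatrix f g).per ≠ 0 :=
  Nat.sSup_mem (h₂ := bddAbove_permRank_set A) <| by
    exact ⟨0, Fin.elim0, Fin.elim0, Function.injective_of_subsingleton _,
      Function.injective_of_subsingleton _, by simp [Matrix.per]⟩

theorem card_le_permRank [PartialOrder R] [IsStrictOrderedRing R]
    {A : Matrix (Fin n) (Fin n) R} (hA : ∀ i j, 0 ≤ A i j) {τ : Fin n → Fin n}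
    (hτ : Function.Injective τ) {S : Finset (Fin n)} (hS : ∀ x ∈ S, A x (τ x) ≠ 0) :
    #S ≤ permRank A := by
  let f := S.orderEmbOfFin rfl
  refine le_permRank f.injective (hτ.comp f.injective)
    (Matrix.per_pos (M := A.submatrix f (τ ∘ f)) (fun _ _ => hA _ _) (Equiv.refl _)
      fun i => hS _ (S.orderEmbOfFin_mem rfl i)).ne'

end permRank

theorem Finset.exists_perm_eqOn_of_injOn {V : Type*} [DecidableEq V] {I : Finset V}
    {σ : V → V} (hσ : Set.InjOn σ I) (hmaps : ∀ x ∈ I, σ x ∈ I) :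
    ∃ τ : Perm V, (∀ x ∈ I, τ x = σ x) ∧ ∀ x ∉ I, τ x = x := by
  have hbij : Set.BijOn σ I I := (I.finite_toSet.injOn_iff_bijOn_of_mapsTo hmaps).1 hσ
  refine ⟨Perm.ofSubtype (hbij.equiv σ), fun x hx => ?_, fun x hx => ?_⟩
  · rw [Perm.ofSubtype_apply_of_mem _ hx]; rfl
  · exact Perm.ofSubtype_apply_of_not_mem _ hx

namespace SimpleGraph

variable {V : Type*} {G : SimpleGraph V}

theorem exists_perm_card_le_card_support [Fintype V] [DecidableEq V] {I : Finset V}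
    {σ : V → V} (hσ : Set.InjOn σ I) (hadj : ∀ x ∈ I, G.Adj x (σ x)) :
    ∃ τ : Perm V, (∀ x ∈ τ.support, G.Adj x (τ x)) ∧ τ.support ⊆ I ∪ I.image σ ∧
      #I ≤ #τ.support := by
  induction I using Finset.strongInduction generalizing σ with | H I ih =>
  by_cases hsurj : I ⊆ I.image σ
  · have hmaps : ∀ x ∈ I, σ x ∈ I := by
      have := eq_of_subset_of_card_le hsurj (card_image_of_injOn hσ).le
      exact fun x hx => this ▸ mem_image_of_mem σ hx
    obtain ⟨τ, hτI, hτ⟩ := I.exists_perm_eqOn_of_injOn hσ hmaps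
    have hsupp : τ.support = I := by
      ext x
      by_cases hx : x ∈ I
      · simpa [hx, hτI x hx] using (G.ne_of_adj (hadj x hx)).symm
      · simp [hx, hτ x hx]
    refine ⟨τ, fun x hx => ?_, by simp [hsupp], by rw [hsupp]⟩
    rw [hsupp] at hx
    exact hτI x hx ▸ hadj x hx
  · obtain ⟨x₀, hx₀I, hx₀⟩ := not_subset.1 hsurj
    set x₁ := σ x₀
    set I' := (I.erase x₀).erase x₁
    have hI' : I' ⊆ I := (erase_subset _ _).trans (erase_subset _ _)
    obtain ⟨τ', hτ'adj, hτ'supp, hτ'card⟩ :=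
      ih I' ((erase_subset _ _).trans_ssubset (erase_ssubset hx₀I))
        (hσ.mono hI') fun x hx => hadj x (hI' hx)
    have hx₀₁ : x₀ ≠ x₁ := G.ne_of_adj (hadj x₀ hx₀I)
    -- the bound `τ'.support ⊆ I' ∪ I'.image σ` keeps `τ'` disjoint from `swap x₀ x₁`
    have hx₀' : x₀ ∉ τ'.support := fun h => by
      rcases mem_union.1 (hτ'supp h) with h | h
      · simp [I'] at h
      · exact hx₀ (image_subset_image hI' h)
    have hx₁' : x₁ ∉ τ'.support := fun h => by
      rcases mem_union.1 (hτ'supp h) with h | h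
      · simp [I'] at h
      · obtain ⟨y, hy, hyx⟩ := mem_image.1 h
        have : y = x₀ := hσ (hI' hy) hx₀I hyx
        simp [I', this] at hy
    have hdisj : Perm.Disjoint (swap x₀ x₁) τ' := by
      rw [Perm.disjoint_iff_disjoint_support, Perm.support_swap hx₀₁]
      simp [hx₀', hx₁']
    refine ⟨swap x₀ x₁ * τ', fun x hx => ?_, ?_, ?_⟩
    · rw [hdisj.support_mul, Perm.support_swap hx₀₁] at hx
      rcases mem_union.1 hx with hx | hx
      · rcases mem_insert.1 hx with rfl | hx
        · simpa [Perm.notMem_support.1 hx₀'] using hadj x hx₀I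
        · rw [mem_singleton.1 hx]
          simpa [Perm.notMem_support.1 hx₁'] using (hadj x₀ hx₀I).symm
      · have hτ'x := Perm.apply_mem_support.2 hx
        rw [Perm.mul_apply, swap_apply_of_ne_of_ne (ne_of_mem_of_not_mem hτ'x hx₀')
          (ne_of_mem_of_not_mem hτ'x hx₁')]
        exact hτ'adj x hx
    · rw [hdisj.support_mul, Perm.support_swap hx₀₁]
      refine union_subset ?_ (hτ'supp.trans (union_subset_union hI' (image_subset_image hI')))
      simp [insert_subset_iff, hx₀I, x₁, mem_image_of_mem σ hx₀I]
    · have h₀ : #I - 1 ≤ #(I.erase x₀) := pred_card_le_card_erase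
      have h₁ : #(I.erase x₀) - 1 ≤ #I' := pred_card_le_card_erase
      rw [hdisj.card_support_mul, Perm.card_support_swap hx₀₁]
      omega

theorem Reachable.of_adj_closed {P : V → Prop} (hP : ∀ u v, G.Adj u v → P u → P v) {u v : V}
    (h : G.Reachable u v) (hu : P u) : P v := by
  rw [reachable_iff_reflTransGen] at h
  induction h with
  | refl => exact hu
  | tail _ hadj ih => exact hP _ _ hadj ih

variable (G) in
@[simps]
def Subgraph.ofPerm (τ : Perm V) : G.Subgraph where
  verts := {x | τ x ≠ x}
  Adj x y := G.Adj x y ∧ (τ x = y ∨ τ y = x)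
  adj_sub h := h.1
  edge_vert := by
    rintro x y ⟨hxy, rfl | rfl⟩ hx
    · exact G.ne_of_adj hxy hx.symm
    · exact G.ne_of_adj hxy (τ.injective hx)
  symm := ⟨fun _ _ h => ⟨h.1.symm, h.2.symm⟩⟩

namespace Subgraph

variable {τ : Perm V}

theorem neighborSet_ofPerm (hτ : ∀ x, τ x ≠ x → G.Adj x (τ x)) {x : V} (hx : τ x ≠ x) :
    (ofPerm G τ).neighborSet x = {τ x, τ.symm x} := by
  ext y
  simp only [mem_neighborSet, ofPerm_adj, Set.mem_insert_iff, Set.mem_singleton_iff]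
  refine ⟨fun ⟨_, h⟩ => ?_, ?_⟩
  · rcases h with rfl | rfl
    · exact Or.inl rfl
    · exact Or.inr (τ.symm_apply_apply y).symm
  · rintro (rfl | rfl)
    · exact ⟨hτ x hx, Or.inl rfl⟩
    · have hx' : τ (τ.symm x) ≠ τ.symm x := by
        rwa [τ.apply_symm_apply, ne_comm, Ne, τ.symm_apply_eq, eq_comm]
      exact ⟨by simpa using (hτ _ hx').symm, Or.inr (τ.apply_symm_apply x)⟩

theorem iff_of_adj_ofPerm {p : V → Prop} (hp : ∀ x, p (τ x) ↔ p x) {x y : V}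
    (h : (ofPerm G τ).Adj x y) : p x ↔ p y := by
  rcases h.2 with rfl | rfl
  exacts [(hp x).symm, hp y]

theorem iff_of_reachable_ofPerm {p : V → Prop} (hp : ∀ x, p (τ x) ↔ p x)
    {u w : (ofPerm G τ).verts} (h : (ofPerm G τ).coe.Reachable u w) : p u ↔ p w :=
  h.of_adj_closed (P := fun x : (ofPerm G τ).verts => p u ↔ p x)
    (fun _ _ hadj hx => hx.trans (iff_of_adj_ofPerm hp hadj)) Iff.rfl

theorem isSachs_ofPerm (hτ : ∀ x, τ x ≠ x → G.Adj x (τ x)) : IsSachs (ofPerm G τ) := by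
  intro C
  induction C using ConnectedComponent.ind with | h v =>
  have hreach : ∀ w ∈ ((ofPerm G τ).coe.connectedComponentMk v).supp,
      (ofPerm G τ).coe.Reachable v w :=
    fun w hw => ConnectedComponent.exact ((ConnectedComponent.mem_supp_iff _ _).1 hw).symm
  by_cases h2 : τ (τ v) = v
  · left
    have hv : τ (τ v) ≠ τ v := by simpa using v.2
    let v' : (ofPerm G τ).verts := ⟨τ v, hv⟩
    have hvv' : (ofPerm G τ).coe.Adj v v' := ⟨hτ v v.2, Or.inl rfl⟩
    have hp : ∀ x, (τ x = v ∨ τ x = τ v) ↔ (x = v ∨ x = τ v) := by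
      intro x
      conv_lhs => rw [← h2]
      rw [τ.injective.eq_iff, τ.injective.eq_iff, h2, or_comm]
    have hsupp : ((ofPerm G τ).coe.connectedComponentMk v).supp = {v, v'} := by
      ext w
      refine ⟨fun hw => ?_, ?_⟩
      · have := (iff_of_reachable_ofPerm (p := fun x : V => x = v ∨ x = τ v) hp
          (hreach w hw)).1 (Or.inl rfl)
        simpa [Subtype.ext_iff] using this
      · rintro (rfl | rfl)
        exacts [rfl, ConnectedComponent.sound hvv'.reachable.symm]
    rw [hsupp, Set.ncard_pair (fun h => hvv'.ne h)]
  · right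
    intro w hw
    have hw2 : τ (τ w) ≠ w := fun h => h2 <|
      (iff_of_reachable_ofPerm (p := fun x => τ (τ x) = x) (by simp) (hreach w hw)).2 h
    rw [neighborSet_ofPerm hτ w.2]
    exact Set.ncard_pair fun h => hw2 (by rw [h, τ.apply_symm_apply])

end Subgraph

end SimpleGraph

theorem graphOf_adj_iff {n : ℕ} {A : Matrix (Fin n) (Fin n) ℝ} (hsym : A.IsSymm)
    (hdiag : ∀ i, A i i = 0) {i j : Fin n} : (graphOf A).Adj i j ↔ A i j ≠ 0 := by
  rw [graphOf, SimpleGraph.fromRel_adj, hsym.apply j i, or_self, and_iff_right_iff_imp]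
  rintro h rfl
  exact h (hdiag i)

/-- Let `A` be a nonnegative symmetric real `n × n` matrix with zero
diagonal and `G` the simple graph on `[n]` with an edge `{i, j}` iff `A i j ≠ 0`.
If `ρ_per(A) = k`, then `G` contains a Sachs subgraph on exactly `k` vertices. -/
theorem exists_sachs_subgraph_of_permRank {n : ℕ} (A : Matrix (Fin n) (Fin n) ℝ)
    (hnonneg : ∀ i j, 0 ≤ A i j) (hsym : A.IsSymm) (hdiag : ∀ i, A i i = 0)
    (k : ℕ) (hk : permRank A = k) :
    ∃ H : (graphOf A).Subgraph, IsSachs H ∧ H.verts.ncard = k := by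
  classical
  subst hk
  obtain ⟨f, g, hf, hg, hper⟩ := exists_submatrix_per_ne_zero A
  obtain ⟨e, he⟩ := Matrix.exists_equiv_forall_ne_zero_of_per_ne_zero hper
  let σ := Function.extend f (g ∘ e) id
  have hσ (i) : σ (f i) = g (e i) := hf.extend_apply _ _ i
  have hσinj : Set.InjOn σ (univ.image f : Finset _) := by
    simp only [coe_image, coe_univ, Set.image_univ, Set.InjOn, Set.mem_range]
    rintro _ ⟨i, rfl⟩ _ ⟨j, rfl⟩ h
    rw [hσ, hσ] at h
    rw [e.injective (hg h)]
  obtain ⟨τ, hτ, -, hcard⟩ :=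
    SimpleGraph.exists_perm_card_le_card_support (G := graphOf A) hσinj <| by
      simpa [graphOf_adj_iff hsym hdiag, hσ] using he
  have hle : #τ.support ≤ permRank A := card_le_permRank hnonneg τ.injective
    fun x hx => (graphOf_adj_iff hsym hdiag).1 (hτ x hx)
  refine ⟨.ofPerm _ τ,
    SimpleGraph.Subgraph.isSachs_ofPerm fun x hx => hτ x (Perm.mem_support.2 hx), ?_⟩
  rw [SimpleGraph.Subgraph.ofPerm_verts, ← Perm.coe_support_eq_set_support, Set.ncard_coe_finset]
  rw [card_image_of_injective _ hf, card_univ, Fintype.card_fin] at hcard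
  omega
end

section
/- Let A be a positive semi-definite real symmetric n×n matrix with ρ_per(A) = k. Then there exists an index set S ⊆ [n] with |S| = k such that the principal submatrix A[S,S] has nonzero permanent. -/
/-- The principal submatrix `A[S, S]` of `A`, with rows and columns indexed by `S`. -/
noncomputable def principalSub {n : ℕ} {R : Type*} (A : Matrix (Fin n) (Fin n) R)
    (S : Finset (Fin n)) : Matrix S S R :=
  A.submatrix Subtype.val Subtype.val

/-!
Write the positive semidefinite matrix as a Gram matrix, `A = Bᵀ B`. Expanding the permanent of
a product `Xᵀ Y` over all maps `φ : κ → m` gives a permanental Cauchy–Binet formula,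
`(card κ)! · per (Xᵀ Y) = ∑_φ per X[φ, ·] · per Y[φ, ·]`, and Cauchy–Schwarz applied to it yields
`per (A[I, J])² ≤ per (A[I, I]) · per (A[J, J])`. Hence a nonzero `k × k` permanent `A[I, J]`
forces the principal permanent `A[I, I]` to be nonzero.
-/

namespace Matrix

variable {ι κ m R : Type*} [Fintype κ] [DecidableEq κ] [Fintype m]

lemma per_submatrix_equiv {ι' κ' : Type*} [Fintype ι] [DecidableEq ι] [Fintype ι']
    [DecidableEq ι'] [Fintype κ'] [DecidableEq κ'] [CommSemiring R]
    (M : Matrix ι κ R) (e₁ : ι' ≃ ι) (e₂ : κ' ≃ κ) :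
    (M.submatrix e₁ e₂).per = M.per :=
  Fintype.sum_equiv (e₁.equivCongr e₂) _ _ fun e =>
    Fintype.prod_equiv e₁ _ _ fun i => by simp [Equiv.equivCongr]

lemma factorial_mul_per_transpose_mul [CommSemiring R] (X Y : Matrix m κ R) :
    (Fintype.card κ).factorial * (Xᵀ * Y).per =
      ∑ φ : κ → m, (X.submatrix φ id).per * (Y.submatrix φ id).per := by
  have expand (φ : κ → m) : (X.submatrix φ id).per * (Y.submatrix φ id).per =
      ∑ σ : κ ≃ κ, ∑ τ : κ ≃ κ, ∏ a, X (φ a) (σ a) * Y (φ a) (τ a) := by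
    simp only [per, submatrix_apply, id, Finset.sum_mul_sum, Finset.prod_mul_distrib]
  have row_sum (σ : κ ≃ κ) : ∑ φ : κ → m, ∑ τ : κ ≃ κ, ∏ a, X (φ a) (σ a) * Y (φ a) (τ a) =
      (Xᵀ * Y).per := by
    rw [Finset.sum_comm, ← per_submatrix_equiv (Xᵀ * Y) σ (Equiv.refl κ)]
    refine Finset.sum_congr rfl fun τ _ => ?_
    rw [← Fintype.prod_sum fun a i => X i (σ a) * Y i (τ a)]
    simp [mul_apply]
  simp_rw [expand]
  rw [Finset.sum_comm, Finset.sum_congr rfl fun σ _ => row_sum σ, Finset.sum_const,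
    Finset.card_univ, Fintype.card_equiv (Equiv.refl κ), nsmul_eq_mul]

lemma per_transpose_mul_sq_le [CommRing R] [LinearOrder R] [IsStrictOrderedRing R]
    (X Y : Matrix m κ R) :
    (Xᵀ * Y).per ^ 2 ≤ (Xᵀ * X).per * (Yᵀ * Y).per := by
  have hc : (0 : R) < ((Fintype.card κ).factorial : R) ^ 2 := by positivity
  have cauchy_schwarz := Finset.sum_mul_sq_le_sq_mul_sq Finset.univ
    (fun φ : κ → m => (X.submatrix φ id).per) (fun φ => (Y.submatrix φ id).per)
  simp only [sq, ← factorial_mul_per_transpose_mul] at cauchy_schwarz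
  refine le_of_mul_le_mul_left ?_ hc
  linarith

open scoped ComplexOrder in
lemma PosSemidef.exists_eq_conjTranspose_mul_self {𝕜 : Type*} [RCLike 𝕜] {A : Matrix m m 𝕜}
    (hA : A.PosSemidef) : ∃ B : Matrix m m 𝕜, A = Bᴴ * B := by
  classical
  open scoped MatrixOrder Matrix.Norms.L2Operator in
  exact CStarAlgebra.nonneg_iff_eq_star_mul_self.mp hA.nonneg

lemma PosSemidef.per_submatrix_sq_le {A : Matrix m m ℝ} (hA : A.PosSemidef) (f g : κ → m) :
    (A.submatrix f g).per ^ 2 ≤ (A.submatrix f f).per * (A.submatrix g g).per := by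
  obtain ⟨B, rfl⟩ := hA.exists_eq_conjTranspose_mul_self
  simp only [conjTranspose_eq_transpose_of_trivial,
    submatrix_mul _ _ _ _ _ Function.bijective_id]
  exact per_transpose_mul_sq_le _ _

lemma PosSemidef.per_submatrix_self_ne_zero {A : Matrix m m ℝ} (hA : A.PosSemidef)
    {f g : κ → m} (h : (A.submatrix f g).per ≠ 0) : (A.submatrix f f).per ≠ 0 := by
  intro hf
  have := hA.per_submatrix_sq_le f g
  rw [hf, zero_mul] at this
  exact h (pow_eq_zero_iff two_ne_zero |>.mp (le_antisymm this (sq_nonneg _)))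

end Matrix

lemma permRank_spec {n : ℕ} {R : Type*} [CommSemiring R] [Nontrivial R]
    (A : Matrix (Fin n) (Fin n) R) :
    ∃ f g : Fin (permRank A) → Fin n, Function.Injective f ∧ Function.Injective g ∧
      (A.submatrix f g).per ≠ 0 := by
  refine Nat.sSup_mem (s := {k | ∃ f g : Fin k → Fin n, Function.Injective f ∧
      Function.Injective g ∧ (A.submatrix f g).per ≠ 0})
    ⟨0, Fin.elim0, Fin.elim0, fun a => a.elim0, fun a => a.elim0, by simp [Matrix.per]⟩
    ⟨n, fun k ⟨f, _, hf, _⟩ => by simpa using Fintype.card_le_of_injective f hf⟩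

lemma per_principalSub_map {n : ℕ} {κ R : Type*} [Fintype κ] [DecidableEq κ] [CommSemiring R]
    (A : Matrix (Fin n) (Fin n) R) (f : κ ↪ Fin n) :
    (principalSub A (Finset.univ.map f)).per = (A.submatrix f f).per := by
  let e : κ ≃ Finset.univ.map f :=
    (Equiv.subtypeUnivEquiv Finset.mem_univ).symm.trans (Finset.univ.equivMap f)
  exact (Matrix.per_submatrix_equiv _ e e).symm

theorem exists_principal_submatrix_per_ne_zero_general {n : ℕ} (A : Matrix (Fin n) (Fin n) ℝ)
    (hpsd : A.PosSemidef) (k : ℕ) (hk : permRank A = k) :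
    ∃ S : Finset (Fin n), S.card = k ∧ (principalSub A S).per ≠ 0 := by
  subst hk
  obtain ⟨f, g, hf, -, hper⟩ := permRank_spec A
  refine ⟨Finset.univ.map ⟨f, hf⟩, by simp, ?_⟩
  rw [per_principalSub_map]
  exact hpsd.per_submatrix_self_ne_zero hper

/-- Let `A` be a positive semi-definite real symmetric `n × n` matrix with
`ρ_per(A) = k`.  Then there is an index set `S ⊆ [n]` with `|S| = k` such that the
principal submatrix `A[S, S]` has nonzero permanent. -/
theorem exists_principal_submatrix_per_ne_zero {n : ℕ} (A : Matrix (Fin n) (Fin n) ℝ)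
    (hsym : A.IsSymm) (hpsd : A.PosSemidef) (k : ℕ) (hk : permRank A = k) :
    ∃ S : Finset (Fin n), S.card = k ∧ (principalSub A S).per ≠ 0 :=
  exists_principal_submatrix_per_ne_zero_general A hpsd k hk
end

section
/- Let A be a positive semi-definite real symmetric n×n matrix and let I, J ⊆ [n] with |I| = |J|. If per(A[I,J]) ≠ 0, then per(A[I∪J, I∪J]) ≠ 0. -/
/-!
Write `A = BᵀB` and attach to each index `k` the linear form `ℓₖ = ∑ₜ B t k • Xₜ`; put
`P_S = ∏_{k ∈ S} ℓₖ`. Expanding the permanent shows that `per A[S, T]` is the Fischer inner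
product `⟨P_S, P_T⟩ = ∑_α α! (P_S)_α (P_T)_α`, which is positive definite. Hence
`per A[I, J] ≠ 0` forces `P_I ≠ 0` and `P_J ≠ 0`; as `P_{I ∪ J} P_{I ∩ J} = P_I P_J` in a domain,
`P_{I ∪ J} ≠ 0`, and so `per A[I ∪ J, I ∪ J] = ⟨P_{I ∪ J}, P_{I ∪ J}⟩ > 0`.
-/

open Finset MvPolynomial
open scoped Nat Matrix

noncomputable def fiberCard {ι τ : Type*} [Fintype ι] [DecidableEq τ] (f : ι → τ) : τ →₀ ℕ :=
  ∑ i, Finsupp.single (f i) 1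

theorem fiberCard_apply {ι τ : Type*} [Fintype ι] [DecidableEq τ] (f : ι → τ) (t : τ) :
    fiberCard f t = Fintype.card {i // f i = t} := by
  simp [fiberCard, Finsupp.finsetSum_apply, Finsupp.single_apply, Fintype.card_subtype]

def equivCompEqEquivPi {α β τ : Type*} (f : α → τ) (g : β → τ) :
    {e : α ≃ β // g ∘ e = f} ≃ ∀ t, ({a // f a = t} ≃ {b // g b = t}) where
  toFun e t := e.1.subtypeEquiv fun a => by rw [← congrFun e.2 a]; rfl
  invFun ε := ⟨Equiv.ofFiberEquiv ε, funext (Equiv.ofFiberEquiv_map ε)⟩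
  left_inv e := by ext a; rfl
  right_inv ε := by funext t; ext ⟨a, rfl⟩; rfl

theorem Fintype.card_equiv_eq_ite {α β : Type*} [Fintype α] [Fintype β] [DecidableEq α]
    [DecidableEq β] :
    Fintype.card (α ≃ β) = if Fintype.card α = Fintype.card β then (Fintype.card α)! else 0 := by
  split_ifs with h
  · exact Fintype.card_equiv (Fintype.equivOfCardEq h)
  · exact Fintype.card_eq_zero_iff.mpr ⟨fun e => h (Fintype.card_congr e)⟩

theorem card_equiv_comp_eq {α β τ : Type*} [Fintype α] [Fintype β] [Fintype τ] [DecidableEq α]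
    [DecidableEq β] [DecidableEq τ] (f : α → τ) (g : β → τ) :
    Fintype.card {e : α ≃ β // g ∘ e = f} =
      if fiberCard f = fiberCard g then (fiberCard f).prod fun _ k => k ! else 0 := by
  rw [Fintype.card_congr (equivCompEqEquivPi f g), Fintype.card_pi]
  simp only [Fintype.card_equiv_eq_ite, ← fiberCard_apply, prod_ite_zero, Finsupp.ext_iff,
    mem_univ, forall_const, Finsupp.prod_fintype _ _ fun _ => Nat.factorial_zero]

namespace MvPolynomial

variable {σ : Type*}

noncomputable def fischer {R : Type*} [CommSemiring R] (p q : MvPolynomial σ R) : R :=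
  ∑ α ∈ p.support, ((α.prod fun _ k => k !) : ℕ) * coeff α p * coeff α q

theorem sum_support_coeff_sum_monomial_mul {R F : Type*} [CommSemiring R] [Fintype F]
    (d : F → σ →₀ ℕ) (c : F → R) (ψ : (σ →₀ ℕ) → R) :
    ∑ α ∈ (∑ x, monomial (d x) (c x)).support, coeff α (∑ x, monomial (d x) (c x)) * ψ α =
      ∑ x, c x * ψ (d x) := by
  classical
  have hsub : (∑ x, monomial (d x) (c x)).support ⊆ univ.image d := by
    intro α hα
    obtain ⟨x, -, hx⟩ := exists_ne_zero_of_sum_ne_zero (by simpa [coeff_sum] using hα)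
    exact mem_image.mpr ⟨x, mem_univ x, Classical.byContradiction fun h => hx (by simp [h])⟩
  rw [sum_subset hsub fun α _ hα => by rw [notMem_support_iff.mp hα, zero_mul]]
  simp only [coeff_sum, coeff_monomial, sum_mul, ite_mul, zero_mul]
  rw [sum_comm]
  simp

theorem fischer_self_pos {R : Type*} [CommRing R] [LinearOrder R] [IsStrictOrderedRing R]
    {p : MvPolynomial σ R} (hp : p ≠ 0) : 0 < fischer p p := by
  refine sum_pos (fun α hα => ?_) (support_nonempty.mpr hp)
  rw [mul_assoc]
  exact mul_pos (Nat.cast_pos.mpr (prod_pos fun _ _ => Nat.factorial_pos _))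
    (mul_self_pos.mpr (mem_support_iff.mp hα))

end MvPolynomial

namespace Matrix

variable {τ κ R : Type*} [Fintype τ] [DecidableEq τ] [CommSemiring R]

noncomputable def colForm (B : Matrix τ κ R) (k : κ) : MvPolynomial τ R :=
  ∑ t, C (B t k) * X t

variable {ι ι' : Type*} [Fintype ι] [DecidableEq ι] [Fintype ι'] [DecidableEq ι']

theorem prod_colForm (B : Matrix τ κ R) (u : ι → κ) :
    ∏ i, B.colForm (u i) = ∑ f : ι → τ, monomial (fiberCard f) (∏ i, B (f i) (u i)) := by
  simp only [colForm, Fintype.prod_sum, fiberCard, monomial_sum_prod, X, C_mul_monomial, mul_one]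

theorem coeff_prod_colForm (B : Matrix τ κ R) (u : ι → κ) (α : τ →₀ ℕ) :
    coeff α (∏ i, B.colForm (u i)) =
      ∑ f : ι → τ, if fiberCard f = α then ∏ i, B (f i) (u i) else 0 := by
  simp only [prod_colForm, coeff_sum, coeff_monomial]

/-- A map `g` is of the form `f ∘ e` for exactly `(fiberCard f)!` bijections `e` if
`fiberCard g = fiberCard f`, and for none otherwise. -/
theorem sum_equiv_prod_eq_factorial_mul_coeff (B : Matrix τ κ R) (f : ι → τ) (w : ι' → κ) :
    ∑ e : ι ≃ ι', ∏ i, B (f i) (w (e i)) =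
      ((fiberCard f).prod fun _ k => k ! : ℕ) * coeff (fiberCard f) (∏ j, B.colForm (w j)) := by
  have reindex : ∀ e : ι' ≃ ι, ∏ i, B (f i) (w (e.symm i)) = ∏ j, B ((f ∘ e) j) (w j) :=
    fun e => (e.prod_comp fun i => B (f i) (w (e.symm i))).symm.trans (by simp)
  rw [← (Equiv.symm_bijective (α := ι') (β := ι)).sum_comp
    fun e : ι ≃ ι' => ∏ i, B (f i) (w (e i))]
  simp only [reindex]
  rw [← Fintype.sum_fiberwise' (fun e : ι' ≃ ι => f ∘ e) fun g => ∏ j, B (g j) (w j),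
    coeff_prod_colForm, mul_sum]
  refine Fintype.sum_congr _ _ fun g => ?_
  rw [sum_const, card_univ, card_equiv_comp_eq]
  split_ifs with h
  · rw [h, nsmul_eq_mul]
  · rw [zero_smul, mul_zero]

theorem per_submatrix_transpose_mul_self (B : Matrix τ κ R) (u : ι → κ) (w : ι' → κ) :
    ((Bᵀ * B).submatrix u w).per = fischer (∏ i, B.colForm (u i)) (∏ j, B.colForm (w j)) := by
  calc ((Bᵀ * B).submatrix u w).per
      = ∑ e : ι ≃ ι', ∑ f : ι → τ, ∏ i, B (f i) (u i) * B (f i) (w (e i)) := by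
        simp only [per, submatrix_apply, mul_apply, transpose_apply, Fintype.prod_sum]
    _ = ∑ f : ι → τ, (∏ i, B (f i) (u i)) *
          (((fiberCard f).prod fun _ k => k ! : ℕ) *
            coeff (fiberCard f) (∏ j, B.colForm (w j))) := by
        simp only [← sum_equiv_prod_eq_factorial_mul_coeff, mul_sum, prod_mul_distrib]
        exact sum_comm
    _ = fischer (∏ i, B.colForm (u i)) (∏ j, B.colForm (w j)) := by
        rw [fischer, prod_colForm B u, ← sum_support_coeff_sum_monomial_mul _ _
          fun α => ((α.prod fun _ k => k ! : ℕ) : R) * coeff α (∏ j, B.colForm (w j))]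
        exact sum_congr rfl fun _ _ => by ring

open scoped MatrixOrder in
theorem PosSemidef.exists_eq_transpose_mul_self {n : Type*} [Fintype n]
    {A : Matrix n n ℝ} (hA : A.PosSemidef) : ∃ B : Matrix n n ℝ, A = Bᵀ * B := by
  classical
  obtain ⟨B, rfl⟩ := CStarAlgebra.nonneg_iff_eq_star_mul_self.mp hA.nonneg
  exact ⟨B, by rw [star_eq_conjTranspose, conjTranspose_eq_transpose_of_trivial]⟩

end Matrix

theorem per_union_ne_zero_of_per_ne_zero_general {n : ℕ} (A : Matrix (Fin n) (Fin n) ℝ)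
    (hpsd : A.PosSemidef) (I J : Finset (Fin n))
    (h : (A.submatrix (Subtype.val : I → Fin n) (Subtype.val : J → Fin n)).per ≠ 0) :
    (principalSub A (I ∪ J)).per ≠ 0 := by
  obtain ⟨B, rfl⟩ := hpsd.exists_eq_transpose_mul_self
  set P : Finset (Fin n) → MvPolynomial (Fin n) ℝ := fun S => ∏ k ∈ S, B.colForm k
  have per_eq (S T : Finset (Fin n)) :
      ((Bᵀ * B).submatrix (Subtype.val : S → Fin n) (Subtype.val : T → Fin n)).per =
        fischer (P S) (P T) := by
    rw [Matrix.per_submatrix_transpose_mul_self, prod_coe_sort, prod_coe_sort]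
  rw [per_eq] at h
  have hI : P I ≠ 0 := fun h0 => h (by simp [h0, fischer])
  have hJ : P J ≠ 0 := fun h0 => h (by simp [h0, fischer])
  have hU : P (I ∪ J) ≠ 0 :=
    left_ne_zero_of_mul <| (prod_union_inter (f := B.colForm)).symm ▸ mul_ne_zero hI hJ
  exact (per_eq _ _ ▸ fischer_self_pos hU).ne'

/-- Let `A` be a positive semi-definite real symmetric `n × n` matrix and
`I, J ⊆ [n]` with `|I| = |J|`.  If `per(A[I, J]) ≠ 0` then `per(A[I ∪ J, I ∪ J]) ≠ 0`. -/
theorem per_union_ne_zero_of_per_ne_zero {n : ℕ} (A : Matrix (Fin n) (Fin n) ℝ)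
    (hsym : A.IsSymm) (hpsd : A.PosSemidef) (I J : Finset (Fin n)) (hIJ : I.card = J.card)
    (h : (A.submatrix (Subtype.val : I → Fin n) (Subtype.val : J → Fin n)).per ≠ 0) :
    (principalSub A (I ∪ J)).per ≠ 0 :=
  per_union_ne_zero_of_per_ne_zero_general A hpsd I J h
end

section
/- Let A be a real n×n matrix with ρ_per(A) = k. Then ρ_per(A) + η_per(A) = n if and only if Σ_{S ⊆ [n], |S| = k} per(A[S,S]) ≠ 0, the sum being over all principal k×k submatrices of A. -/
open Polynomial Finset


lemma per_reindex {ι κ ι' κ' R : Type*} [Fintype ι] [Fintype κ] [Fintype ι'] [Fintype κ']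
    [DecidableEq ι] [DecidableEq κ] [DecidableEq ι'] [DecidableEq κ'] [CommSemiring R]
    (e₁ : ι' ≃ ι) (e₂ : κ' ≃ κ) (M : Matrix ι κ R) :
    (M.submatrix e₁ e₂).per = M.per := by
  unfold Matrix.per
  refine Fintype.sum_equiv (e₁.equivCongr e₂) _ _ fun f => ?_
  rw [← Equiv.prod_comp e₁ fun i => M i ((e₁.equivCongr e₂ f) i)]
  simp [Matrix.submatrix_apply, Equiv.equivCongr]

lemma per_inner_sum_aux {n : ℕ} {R : Type*} [CommRing R] (A : Matrix (Fin n) (Fin n) R)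
    (T : Finset (Fin n)) :
    ∑ σ : Equiv.Perm (Fin n),
      (∏ i ∈ T, -(X * (1 : Matrix (Fin n) (Fin n) R[X]) i (σ i))) *
        ∏ i ∈ univ \ T, C (A i (σ i))
      = (-X)^T.card * C ((principalSub A Tᶜ).per) := by
  classical
  set f : Equiv.Perm (Fin n) → R[X] := fun σ =>
      (∏ i ∈ T, -(X * (1 : Matrix (Fin n) (Fin n) R[X]) i (σ i))) *
        ∏ i ∈ univ \ T, C (A i (σ i)) with hf
  have hP : ∀ σ : Equiv.Perm (Fin n), f σ ≠ 0 → ∀ i ∈ T, σ i = i := by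
    intro σ hσ
    by_contra hc
    push_neg at hc
    obtain ⟨i, hiT, hi⟩ := hc
    apply hσ
    have h1 : (1 : Matrix (Fin n) (Fin n) R[X]) i (σ i) = 0 :=
      Matrix.one_apply_ne (Ne.symm hi)
    show (∏ i ∈ T, -(X * (1 : Matrix (Fin n) (Fin n) R[X]) i (σ i))) *
        ∏ i ∈ univ \ T, C (A i (σ i)) = 0
    rw [Finset.prod_eq_zero hiT (by rw [h1]; ring), zero_mul]
  rw [show ∑ σ : Equiv.Perm (Fin n), f σ = ∑ σ ∈ univ.filter (fun σ => ∀ i ∈ T, σ i = i), f σ from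
    (Finset.sum_filter_of_ne (fun σ _ h => hP σ h)).symm]
  rw [Finset.sum_subtype (p := fun σ => ∀ i ∈ T, σ i = i) _ (fun σ => by simp) f]
  have heq : ∀ σ : {σ : Equiv.Perm (Fin n) // ∀ i ∈ T, σ i = i},
      f σ.val = (-X)^T.card * ∏ j : {x // x ∈ Tᶜ}, C (A j (σ.val j)) := by
    intro ⟨σ, hσ⟩
    rw [hf]
    simp only
    congr 1
    · rw [Finset.prod_congr rfl (fun i hi => by rw [hσ i hi, Matrix.one_apply_eq, mul_one]),
        Finset.prod_const, Finset.card_def]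
    · rw [← Finset.compl_eq_univ_sdiff, ← Finset.prod_coe_sort Tᶜ (fun i => C (A i (σ i)))]
  rw [Finset.sum_congr rfl (fun σ _ => heq σ), ← Finset.mul_sum]
  congr 1
  rw [principalSub, Matrix.per, map_sum]
  have hpc : ∀ σ : Equiv.Perm (Fin n), (∀ a, ¬ a ∈ Tᶜ → σ a = a) ↔ (∀ i ∈ T, σ i = i) := by
    intro σ
    simp [Finset.mem_compl, not_not]
  refine (Fintype.sum_equiv ((Equiv.Perm.subtypeEquivSubtypePerm (fun a => a ∈ Tᶜ)).trans
      (Equiv.subtypeEquivRight hpc)) _ _ fun τ => ?_).symm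
  rw [map_prod]
  refine Finset.prod_congr rfl fun j _ => ?_
  have hv : (((Equiv.Perm.subtypeEquivSubtypePerm (fun a => a ∈ Tᶜ)).trans
      (Equiv.subtypeEquivRight hpc)) τ).val j.val = (τ j).val := by
    simp only [Equiv.trans_apply, Equiv.subtypeEquivRight_apply_coe]
    rw [Equiv.Perm.subtypeEquivSubtypePerm]
    simp only [Equiv.coe_fn_mk]
    rw [Equiv.Perm.ofSubtype_apply_of_mem τ j.prop]
  rw [hv, Matrix.submatrix_apply]

lemma permPoly_eq {n : ℕ} {R : Type*} [CommRing R] (A : Matrix (Fin n) (Fin n) R) :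
    permPoly A = ∑ T ∈ (univ : Finset (Fin n)).powerset,
      (-X)^T.card * C ((principalSub A Tᶜ).per) := by
  rw [permPoly, Matrix.per]
  have h1 : ∀ σ : Equiv.Perm (Fin n),
      ∏ i, (A.map C - (X : R[X]) • 1) i (σ i)
      = ∑ T ∈ (univ : Finset (Fin n)).powerset,
          (∏ i ∈ T, -(X * (1 : Matrix (Fin n) (Fin n) R[X]) i (σ i))) *
            ∏ i ∈ univ \ T, C (A i (σ i)) := by
    intro σ
    rw [← Finset.prod_add]
    refine Finset.prod_congr rfl fun i _ => ?_
    simp [Matrix.sub_apply, Matrix.map_apply, Matrix.smul_apply, sub_eq_neg_add]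
  rw [Finset.sum_congr rfl fun σ _ => h1 σ, Finset.sum_comm]
  exact Finset.sum_congr rfl fun T _ => per_inner_sum_aux A T

lemma coeff_permPoly_s13 {n : ℕ} {R : Type*} [CommRing R] (A : Matrix (Fin n) (Fin n) R) (m : ℕ) :
    (permPoly A).coeff m
      = (-1:R)^m * ∑ T ∈ (univ : Finset (Fin n)).powersetCard m, (principalSub A Tᶜ).per := by
  rw [permPoly_eq, Polynomial.finset_sum_coeff]
  have h1 : ∀ T ∈ (univ : Finset (Fin n)).powerset,
      ((-X)^T.card * C ((principalSub A Tᶜ).per)).coeff m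
      = if T.card = m then (-1:R)^m * (principalSub A Tᶜ).per else 0 := by
    intro T _
    have : ((-X : R[X]))^T.card * C ((principalSub A Tᶜ).per)
        = C ((-1:R)^T.card * (principalSub A Tᶜ).per) * X ^ T.card := by
      rw [neg_pow, map_mul, map_pow, map_neg, map_one]
      ring
    rw [this, Polynomial.coeff_C_mul_X_pow]
    by_cases h : T.card = m
    · subst h; simp
    · rw [if_neg (fun hc => h hc.symm), if_neg h]
  rw [Finset.sum_congr rfl h1, ← Finset.sum_filter, ← Finset.powersetCard_eq_filter,
    Finset.mul_sum]
lemma per_empty {m : Type*} [Fintype m] [DecidableEq m] [IsEmpty m] {R : Type*} [CommSemiring R]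
    (M : Matrix m m R) : M.per = 1 := by
  simp [Matrix.per, Finset.univ_eq_empty]

lemma bddAbove_permRankSet {n : ℕ} {R : Type*} [CommSemiring R] (A : Matrix (Fin n) (Fin n) R) :
    BddAbove {k | ∃ f g : Fin k → Fin n, Function.Injective f ∧ Function.Injective g ∧
      (A.submatrix f g).per ≠ 0} := by
  refine ⟨n, fun k hk => ?_⟩
  obtain ⟨f, _, hf, _, _⟩ := hk
  simpa using Fintype.card_le_of_injective f hf

lemma permRank_le {n : ℕ} (A : Matrix (Fin n) (Fin n) ℝ) : permRank A ≤ n := by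
  refine csSup_le ⟨0, Fin.elim0, Fin.elim0, fun x => x.elim0, fun x => x.elim0, ?_⟩
    (fun k hk => ?_)
  · rw [per_empty]; exact one_ne_zero
  · obtain ⟨f, _, hf, _, _⟩ := hk
    simpa using Fintype.card_le_of_injective f hf

lemma per_principal_eq_zero {n : ℕ} (A : Matrix (Fin n) (Fin n) ℝ) {k : ℕ}
    (hk : permRank A = k) {S : Finset (Fin n)} (hS : k < S.card) :
    (principalSub A S).per = 0 := by
  by_contra h
  set e := (S.orderIsoOfFin rfl).toEquiv with he
  have hmem : S.card ∈ {k | ∃ f g : Fin k → Fin n, Function.Injective f ∧ Function.Injective g ∧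
      (A.submatrix f g).per ≠ 0} := by
    refine ⟨Subtype.val ∘ e, Subtype.val ∘ e, Subtype.val_injective.comp e.injective,
      Subtype.val_injective.comp e.injective, ?_⟩
    have : A.submatrix (Subtype.val ∘ e) (Subtype.val ∘ e)
        = (principalSub A S).submatrix e e := by
      rw [principalSub, Matrix.submatrix_submatrix]
    rw [this, per_reindex]
    exact h
  have := le_csSup (bddAbove_permRankSet A) hmem
  rw [permRank] at hk
  omega

/-- Let `A` be a real `n × n` matrix with `ρ_per(A) = k`.  Then
`ρ_per(A) + η_per(A) = n` iff `Σ_{S ⊆ [n], |S| = k} per(A[S, S]) ≠ 0`. -/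
theorem perm_rank_nullity_iff_sum_principal_ne_zero {n : ℕ} (A : Matrix (Fin n) (Fin n) ℝ)
    (k : ℕ) (hk : permRank A = k) :
    permRank A + permNullity A = n ↔
      ∑ S ∈ Finset.univ.powersetCard k, (principalSub A S).per ≠ 0 := by
  have hkn : k ≤ n := hk ▸ permRank_le A
  -- low coefficients vanish
  have hlo : ∀ m < n - k, (permPoly A).coeff m = 0 := by
    intro m hm
    rw [coeff_permPoly_s13]
    rw [Finset.sum_eq_zero, mul_zero]
    intro T hT
    rw [Finset.mem_powersetCard_univ] at hT
    refine per_principal_eq_zero A hk ?_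
    rw [Finset.card_compl, hT, Fintype.card_fin]
    omega
  -- the (n-k)-th coefficient
  have hnk : (permPoly A).coeff (n - k)
      = (-1:ℝ)^(n-k) * ∑ S ∈ Finset.univ.powersetCard k, (principalSub A S).per := by
    rw [coeff_permPoly_s13]
    congr 1
    refine Finset.sum_nbij' (fun T => Tᶜ) (fun S => Sᶜ) ?_ ?_ ?_ ?_ ?_
    · intro T hT
      rw [Finset.mem_powersetCard_univ] at *
      rw [Finset.card_compl, hT, Fintype.card_fin]
      omega
    · intro S hS
      rw [Finset.mem_powersetCard_univ] at *
      rw [Finset.card_compl, hS, Fintype.card_fin]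
    · intro T _; exact compl_compl T
    · intro S _; exact compl_compl S
    · intro T _; rfl
  -- permPoly ≠ 0
  have hp0 : permPoly A ≠ 0 := by
    intro h
    have hc := coeff_permPoly_s13 A n
    have hps : (univ : Finset (Fin n)).powersetCard n = {univ} := by
      have h2 := Finset.powersetCard_self (univ : Finset (Fin n))
      rwa [Finset.card_univ, Fintype.card_fin] at h2
    rw [h, Polynomial.coeff_zero, hps] at hc
    rw [Finset.sum_singleton] at hc
    haveI : IsEmpty {x : Fin n // x ∈ (univ : Finset (Fin n))ᶜ} := by
      refine ⟨fun x => ?_⟩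
      have := x.2
      simp at this
    rw [per_empty, mul_one] at hc
    exact pow_ne_zero n (neg_ne_zero.mpr one_ne_zero) hc.symm
  have hXdvd : ∀ m : ℕ, ((X : ℝ[X]) ^ m ∣ permPoly A) ↔ ∀ d < m, (permPoly A).coeff d = 0 :=
    fun m => Polynomial.X_pow_dvd_iff
  have hge : n - k ≤ permNullity A := by
    rw [permNullity, Polynomial.le_rootMultiplicity_iff hp0, map_zero, sub_zero]
    exact (hXdvd _).mpr hlo
  have hkey : permNullity A = n - k ↔ (permPoly A).coeff (n - k) ≠ 0 := by
    constructor
    · intro hν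
      have := Polynomial.pow_rootMultiplicity_not_dvd hp0 (0 : ℝ)
      rw [map_zero, sub_zero, ← permNullity, hν, hXdvd] at this
      push_neg at this
      obtain ⟨d, hd1, hd2⟩ := this
      have : d = n - k := by
        by_contra hne
        exact hd2 (hlo d (by omega))
      rwa [this] at hd2
    · intro hc
      have hle : permNullity A ≤ n - k := by
        rw [permNullity, Polynomial.rootMultiplicity_le_iff hp0, map_zero, sub_zero]
        rw [hXdvd]
        push_neg
        exact ⟨n - k, by omega, hc⟩
      omega
  rw [hk]
  constructor
  · intro h
    have hν : permNullity A = n - k := by omega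
    have := hkey.mp hν
    rw [hnk] at this
    exact fun h0 => this (by rw [h0, mul_zero])
  · intro h
    have hc : (permPoly A).coeff (n - k) ≠ 0 := by
      rw [hnk]
      exact mul_ne_zero (pow_ne_zero _ (neg_ne_zero.mpr one_ne_zero)) h
    have := hkey.mpr hc
    omega
end
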